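/- There is a universal constant C such that for all real numbers a > 0, 0 < δ < a and 0 < r ≤ a, the matrix-valued integral ∫_{{q ∈ ℝ³ : δ < |q| < a, q₃ > −r}} ( |q|² I − 3 q⊗q ) / |q|⁵ dq has norm at most C(1 + log(a/r)); in particular the bound is independent of δ. (The proof rests on the identity ∫_{S²} (I − 3Θ⊗Θ) dΘ = 0, where the integral is with respect to the surface measure on the unit sphere S².) -/

import Mathlib

/-!
Setting: Ω ⊂ ℝ³ is a bounded open domain with smooth boundary, encoded via a smooth
defining function ρ (Ω = {ρ < 0}, ∇ρ ≠ 0 on ∂Ω); the outward unit normal is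
ν = ∇ρ/‖∇ρ‖ and the surface measure on ∂Ω is the 2-dimensional Hausdorff measure.
Sobolev spaces W^{k,p} are encoded through pointwise derivatives and integrability of
the iterated derivatives; curl and divergence are the classical pointwise operators.
-/

noncomputable section

open MeasureTheory Metric Set Filter Topology Real
open scoped RealInnerProductSpace

abbrev E3 : Type := EuclideanSpace ℝ (Fin 3)

/-- the `i`-th standard basis vector of `ℝ³`. -/
def e3 (i : Fin 3) : E3 := EuclideanSpace.single i 1

/-- the vector of `ℝ³` with the given three components. -/
def vec3 (a b c : ℝ) : E3 := (WithLp.equiv 2 (Fin 3 → ℝ)).symm ![a, b, c]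

/-- cross product in `ℝ³`. -/
def cross3 (u v : E3) : E3 :=
  vec3 (u 1 * v 2 - u 2 * v 1) (u 2 * v 0 - u 0 * v 2) (u 0 * v 1 - u 1 * v 0)

/-- divergence `∇·u` of a vector field on `ℝ³`. -/
def vdiv (u : E3 → E3) (x : E3) : ℝ := ∑ i, fderiv ℝ u x (e3 i) i

/-- curl `∇×u` of a vector field on `ℝ³`. -/
def vcurl (u : E3 → E3) (x : E3) : E3 :=
  vec3 (fderiv ℝ u x (e3 1) 2 - fderiv ℝ u x (e3 2) 1)
       (fderiv ℝ u x (e3 2) 0 - fderiv ℝ u x (e3 0) 2)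
       (fderiv ℝ u x (e3 0) 1 - fderiv ℝ u x (e3 1) 0)

/-- outward unit normal of `Ω = {ρ < 0}`, namely `∇ρ/‖∇ρ‖`. -/
def outNormal (ρ : E3 → ℝ) (x : E3) : E3 := ‖gradient ρ x‖⁻¹ • gradient ρ x

/-- the Biot–Savart integral `∫_Ω F(y) × (x−y) / (4π|x−y|³) dy`. -/
def biotSavart (Ω : Set E3) (F : E3 → E3) (x : E3) : E3 :=
  ∫ y in Ω, (4 * π * ‖x - y‖ ^ 3)⁻¹ • cross3 (F y) (x - y)

/-- membership in the Sobolev space `W^{k,p}(Ω)`. -/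
def MemSobolev (k : ℕ) (p : ℝ) (Ω : Set E3) {F : Type*} [NormedAddCommGroup F]
    [NormedSpace ℝ F] (u : E3 → F) : Prop :=
  ContDiffOn ℝ k u Ω ∧
    ∀ i ∈ Finset.range (k + 1),
      IntegrableOn (fun x => ‖iteratedFDerivWithin ℝ i u Ω x‖ ^ p) Ω

/-- the Sobolev norm `‖u‖_{W^{k,p}(Ω)}`. -/
def sobolevNorm (k : ℕ) (p : ℝ) (Ω : Set E3) {F : Type*} [NormedAddCommGroup F]
    [NormedSpace ℝ F] (u : E3 → F) : ℝ :=
  ∑ i ∈ Finset.range (k + 1), (∫ x in Ω, ‖iteratedFDerivWithin ℝ i u Ω x‖ ^ p) ^ (1 / p)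

/-- the trace Sobolev norm `‖g‖_{W^{k－1/p,p}(∂Ω)}`, defined as the infimum of the
`W^{k,p}(Ω)` norms of all extensions of `g` to `Ω`. -/
def traceSobolevNorm (k : ℕ) (p : ℝ) (Ω : Set E3) {F : Type*} [NormedAddCommGroup F]
    [NormedSpace ℝ F] (g : E3 → F) : ℝ :=
  sInf {c | ∃ G : E3 → F, MemSobolev k p Ω G ∧ ContinuousOn G (closure Ω) ∧
    (∀ x ∈ frontier Ω, G x = g x) ∧ c = sobolevNorm k p Ω G}

/-- the logarithmic weight `ℓ(y) = log(2 + 1/dist(y,∂Ω))`. -/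
def ell (Ω : Set E3) (y : E3) : ℝ := Real.log (2 + 1 / Metric.infDist y (frontier Ω))

/-- (Frobenius) norm of a `3×3` matrix. -/
def matNorm (M : Matrix (Fin 3) (Fin 3) ℝ) : ℝ := Real.sqrt (∑ i, ∑ j, (M i j) ^ 2)

/-- the `j`-th column of a `3×3` matrix, as a vector of `ℝ³`. -/
def matCol (M : Matrix (Fin 3) (Fin 3) ℝ) (j : Fin 3) : E3 := vec3 (M 0 j) (M 1 j) (M 2 j)

/-- the matrix kernel `(|z−y|² I − 3 (z−y)⊗(z−y)) / |z−y|⁵`. -/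
def kmat (z y : E3) : Matrix (Fin 3) (Fin 3) ℝ :=
  Matrix.of fun i j =>
    (‖z - y‖ ^ 2 * (if i = j then (1 : ℝ) else 0) - 3 * ((z - y) i) * ((z - y) j)) / ‖z - y‖ ^ 5

/-- Levi-Civita symbol `ε_{ijk}` on `Fin 3`. -/
def lev (i j k : Fin 3) : ℝ :=
  (((j : ℕ) : ℝ) - ((i : ℕ) : ℝ)) * (((k : ℕ) : ℝ) - ((i : ℕ) : ℝ)) *
    (((k : ℕ) : ℝ) - ((j : ℕ) : ℝ)) / 2

/-- directional derivative of a vector field `w` along a vector field `Z`,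
i.e. `Z` acting on `w` as the first-order differential operator `Z_i ∂_{x_i}`. -/
def dirDeriv (Z : E3 → E3) (w : E3 → E3) : E3 → E3 := fun x => fderiv ℝ w x (Z x)

/-- a harmonic vector field on `Ω` tangent to the boundary:
`∇×h = 0`, `∇·h = 0` in `Ω` and `h·ν = 0` on `∂Ω`. -/
def IsHarmonicTangent (Ω : Set E3) (ρ : E3 → ℝ) (h : E3 → E3) : Prop :=
  DifferentiableOn ℝ h Ω ∧ (∀ x ∈ Ω, vcurl h x = 0) ∧ (∀ x ∈ Ω, vdiv h x = 0) ∧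
    ∀ x ∈ frontier Ω, ⟪h x, outNormal ρ x⟫ = 0

/-- the boundary field `A^j(x) = ∫_{∂Ω} ν_j(y) (x−y)/(4π|x−y|³) dσ(y)`. -/
def Avec (Ω : Set E3) (ρ : E3 → ℝ) (j : Fin 3) (x : E3) : E3 :=
  ∫ y in frontier Ω, ((4 * π * ‖x - y‖ ^ 3)⁻¹ * outNormal ρ y j) • (x - y) ∂μH[2]

/-!
The kernel `(|q|² I - n q⊗q) / |q|^(n+2)` on `ℝⁿ` has mean zero over every annulus
`δ < |q| < a`: a coordinate reflection changes the sign of each off-diagonal entry, coordinate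
swaps make all diagonal entries have the same integral, and the kernel is trace-free.
So the integral over the truncated annulus is minus the integral over the cut-off cap
`{q₃ ≤ -r}`, which lies in the shell `r ≤ |q| < a`. There the kernel is `O(|q|^(-n))`, and in
polar coordinates `∫_{r ≤ |q| < a} |q|^(-n) dq = n |B₁| log (a / r)`, independently of `δ`.
-/

lemma setIntegral_norm_preimage_comp_linearIsometryEquiv {E F : Type*} [NormedAddCommGroup E]
    [InnerProductSpace ℝ E] [FiniteDimensional ℝ E] [MeasurableSpace E] [BorelSpace E]
    [NormedAddCommGroup F] [NormedSpace ℝ F] (T : E ≃ₗᵢ[ℝ] E) (f : E → F) (I : Set ℝ) :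
    ∫ x in norm ⁻¹' I, f (T x) = ∫ x in norm ⁻¹' I, f x := by
  have hT : T ⁻¹' (norm ⁻¹' I) = norm ⁻¹' I := by ext x; simp
  simpa [hT] using T.measurePreserving.setIntegral_preimage_emb
    T.toHomeomorph.measurableEmbedding f (norm ⁻¹' I)

lemma integrableOn_closedAnnulus_of_continuousOn {E F : Type*} [NormedAddCommGroup E]
    [ProperSpace E] [MeasurableSpace E] [OpensMeasurableSpace E] [NormedAddCommGroup F]
    {μ : Measure E} [IsFiniteMeasureOnCompacts μ] {f : E → F} (hf : ContinuousOn f {0}ᶜ)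
    {δ : ℝ} (hδ : 0 < δ) (a : ℝ) : IntegrableOn f (norm ⁻¹' Icc δ a) μ := by
  have hcpt : IsCompact (norm ⁻¹' Icc δ a : Set E) :=
    (isCompact_closedBall 0 a).of_isClosed_subset (isClosed_Icc.preimage continuous_norm)
      fun x hx => by simpa using hx.2
  exact (hf.mono fun x hx => by simpa using (hδ.trans_le hx.1).ne').integrableOn_compact hcpt

open Module in
lemma setIntegral_shell_inv_norm_pow_finrank {E : Type*} [NormedAddCommGroup E]
    [NormedSpace ℝ E] [FiniteDimensional ℝ E] [Nontrivial E] [MeasurableSpace E] [BorelSpace E]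
    (μ : Measure E) [μ.IsAddHaarMeasure] {r a : ℝ} (hr : 0 < r) (hra : r ≤ a) :
    ∫ x in norm ⁻¹' Ico r a, (‖x‖ ^ finrank ℝ E)⁻¹ ∂μ =
      finrank ℝ E * μ.real (ball 0 1) * Real.log (a / r) := by
  set d := finrank ℝ E
  have hd : 0 < d := finrank_pos
  have hpos : Ico r a ⊆ Ioi 0 := fun y hy => hr.trans_le hy.1
  have hind : (norm ⁻¹' Ico r a).indicator (fun x : E => (‖x‖ ^ d)⁻¹) =
      fun x => (Ico r a).indicator (fun t => (t ^ d)⁻¹) ‖x‖ :=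
    funext fun x => indicator_comp_right (g := fun t : ℝ => (t ^ d)⁻¹) norm
  have hpolar : (fun y : ℝ => y ^ (d - 1) • (Ico r a).indicator (fun t => (t ^ d)⁻¹) y) =
      (Ico r a).indicator (fun y => y⁻¹) := by
    funext y
    by_cases hy : y ∈ Ico r a
    · have hy0 : y ≠ 0 := (hpos hy).ne'
      rw [indicator_of_mem hy, indicator_of_mem hy, smul_eq_mul, ← Nat.sub_add_cancel hd,
        pow_succ, Nat.add_sub_cancel]
      field_simp
    · simp [indicator_of_notMem hy]
  rw [← integral_indicator (measurable_norm measurableSet_Ico), hind,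
    integral_fun_norm_addHaar μ, hpolar, integral_indicator measurableSet_Ico,
    Measure.restrict_restrict measurableSet_Ico,
    inter_eq_self_of_subset_left hpos, integral_Ico_eq_integral_Ioo,
    ← integral_Ioc_eq_integral_Ioo, ← intervalIntegral.integral_of_le hra,
    integral_inv_of_pos hr (hr.trans_le hra), nsmul_eq_mul, smul_eq_mul, mul_assoc]

section DipoleKernel

variable {ι : Type*} [Fintype ι] [DecidableEq ι]

def dipoleKernel (i j : ι) (q : EuclideanSpace ℝ ι) : ℝ :=
  (‖q‖ ^ 2 * (if i = j then (1 : ℝ) else 0) - Fintype.card ι * q i * q j) /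
    ‖q‖ ^ (Fintype.card ι + 2)

lemma continuousOn_dipoleKernel (i j : ι) : ContinuousOn (dipoleKernel i j) {0}ᶜ := by
  unfold dipoleKernel
  fun_prop (disch := intro q hq; simpa using hq)

lemma abs_dipoleKernel_le (i j : ι) (q : EuclideanSpace ℝ ι) :
    |dipoleKernel i j q| ≤ (Fintype.card ι + 1) / ‖q‖ ^ Fintype.card ι := by
  rcases eq_or_ne q 0 with rfl | hq0
  · simpa [dipoleKernel] using div_nonneg (by positivity) (pow_nonneg le_rfl _)
  have hq : 0 < ‖q‖ := norm_pos_iff.2 hq0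
  have hi : |q i| ≤ ‖q‖ := by simpa using PiLp.norm_apply_le q i
  have hj : |q j| ≤ ‖q‖ := by simpa using PiLp.norm_apply_le q j
  have hnum : |‖q‖ ^ 2 * (if i = j then (1 : ℝ) else 0) - Fintype.card ι * q i * q j|
      ≤ (Fintype.card ι + 1) * ‖q‖ ^ 2 := by
    have hdiag : |‖q‖ ^ 2 * (if i = j then (1 : ℝ) else 0)| ≤ ‖q‖ ^ 2 := by split_ifs <;> simp
    have hqq : |(Fintype.card ι : ℝ) * q i * q j| ≤ Fintype.card ι * ‖q‖ ^ 2 := by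
      rw [abs_mul, abs_mul, Nat.abs_cast, sq, mul_assoc]
      gcongr
    calc _ ≤ _ := abs_sub _ _
      _ ≤ _ := add_le_add hdiag hqq
      _ = _ := by ring
  rw [dipoleKernel, abs_div, abs_of_pos (pow_pos hq _), pow_add,
    div_le_div_iff₀ (by positivity) (by positivity)]
  calc _ ≤ (Fintype.card ι + 1) * ‖q‖ ^ 2 * ‖q‖ ^ Fintype.card ι := by gcongr
    _ = _ := by ring

def coordReflection (i : ι) : EuclideanSpace ℝ ι ≃ₗᵢ[ℝ] EuclideanSpace ℝ ι :=
  LinearIsometryEquiv.piLpCongrRight 2 fun k => if k = i then .neg ℝ else .refl ℝ ℝ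

lemma coordReflection_apply (i : ι) (q : EuclideanSpace ℝ ι) (k : ι) :
    coordReflection i q k = if k = i then -q k else q k := by
  by_cases hk : k = i <;> simp [coordReflection, hk]

lemma dipoleKernel_coordReflection {i j : ι} (hij : i ≠ j) (q : EuclideanSpace ℝ ι) :
    dipoleKernel i j (coordReflection i q) = -dipoleKernel i j q := by
  simp only [dipoleKernel, LinearIsometryEquiv.norm_map, coordReflection_apply, ↓reduceIte,
    if_neg hij.symm, if_neg hij]
  ring

lemma dipoleKernel_swap (i k : ι) (q : EuclideanSpace ℝ ι) :
    dipoleKernel i i (LinearIsometryEquiv.piLpCongrLeft 2 ℝ ℝ (Equiv.swap k i) q) =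
      dipoleKernel k k q := by
  simp [dipoleKernel, Equiv.piCongrLeft'_apply, Equiv.symm_swap]

lemma sum_dipoleKernel_self (q : EuclideanSpace ℝ ι) : ∑ k, dipoleKernel k k q = 0 := by
  simp only [dipoleKernel, ↓reduceIte, mul_one, ← Finset.sum_div, Finset.sum_sub_distrib,
    Finset.sum_const, Finset.card_univ, nsmul_eq_mul, mul_assoc, ← Finset.mul_sum,
    ← sq, ← EuclideanSpace.real_norm_sq_eq]
  ring

lemma integrableOn_dipoleKernel_annulus {δ : ℝ} (hδ : 0 < δ) (a : ℝ) (i j : ι) :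
    IntegrableOn (dipoleKernel i j) (norm ⁻¹' Ioo δ a) :=
  (integrableOn_closedAnnulus_of_continuousOn (continuousOn_dipoleKernel i j) hδ a).mono_set
    (preimage_mono Ioo_subset_Icc_self)

lemma integral_dipoleKernel_annulus {δ : ℝ} (hδ : 0 < δ) (a : ℝ) (i j : ι) :
    ∫ q in norm ⁻¹' Ioo δ a, dipoleKernel i j q = 0 := by
  rcases eq_or_ne i j with rfl | hij
  · have hswap (k : ι) : ∫ q in norm ⁻¹' Ioo δ a, dipoleKernel k k q =
        ∫ q in norm ⁻¹' Ioo δ a, dipoleKernel i i q := by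
      simpa [dipoleKernel_swap] using (setIntegral_norm_preimage_comp_linearIsometryEquiv
        (LinearIsometryEquiv.piLpCongrLeft 2 ℝ ℝ (Equiv.swap k i)) (dipoleKernel i i) (Ioo δ a))
    have htrace : ∑ k : ι, ∫ q in norm ⁻¹' Ioo δ a, dipoleKernel k k q = 0 := by
      rw [← integral_finsetSum _ fun k _ => integrableOn_dipoleKernel_annulus hδ a k k]
      simp [sum_dipoleKernel_self]
    simp only [hswap, Finset.sum_const, Finset.card_univ, nsmul_eq_mul] at htrace
    have hcard : (Fintype.card ι : ℝ) ≠ 0 := Nat.cast_ne_zero.2 (Fintype.card_pos_iff.2 ⟨i⟩).ne'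
    exact (mul_eq_zero.1 htrace).resolve_left hcard
  · have hodd := setIntegral_norm_preimage_comp_linearIsometryEquiv (coordReflection i)
      (dipoleKernel i j) (Ioo δ a)
    simp only [dipoleKernel_coordReflection hij, integral_neg] at hodd
    linarith

lemma abs_setIntegral_dipoleKernel_le_of_subset_shell [Nonempty ι] {r a : ℝ} (hr : 0 < r)
    (hra : r ≤ a) {B : Set (EuclideanSpace ℝ ι)} (hB : B ⊆ norm ⁻¹' Ico r a) (i j : ι) :
    |∫ q in B, dipoleKernel i j q| ≤ (Fintype.card ι + 1) *
      (Fintype.card ι * volume.real (ball (0 : EuclideanSpace ℝ ι) 1) * Real.log (a / r)) := by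
  set n := Fintype.card ι
  have hshell := setIntegral_shell_inv_norm_pow_finrank
    (volume : Measure (EuclideanSpace ℝ ι)) hr hra
  rw [finrank_euclideanSpace] at hshell
  have hcont : ContinuousOn (fun q : EuclideanSpace ℝ ι => (n + 1 : ℝ) * (‖q‖ ^ n)⁻¹) {0}ᶜ :=
    continuousOn_const.mul <| (continuous_norm.pow n).continuousOn.inv₀ fun q hq =>
      pow_ne_zero _ (norm_ne_zero_iff.2 hq)
  have hint : IntegrableOn (fun q : EuclideanSpace ℝ ι => (n + 1 : ℝ) * (‖q‖ ^ n)⁻¹)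
      (norm ⁻¹' Ico r a) :=
    (integrableOn_closedAnnulus_of_continuousOn hcont hr a).mono_set
      (preimage_mono Ico_subset_Icc_self)
  calc |∫ q in B, dipoleKernel i j q| = ‖∫ q in B, dipoleKernel i j q‖ := (norm_eq_abs _).symm
    _ ≤ ∫ q in B, (n + 1 : ℝ) * (‖q‖ ^ n)⁻¹ :=
        norm_integral_le_of_norm_le (hint.mono_set hB) (ae_of_all _ fun q =>
          (abs_dipoleKernel_le i j q).trans_eq (div_eq_mul_inv _ _))
    _ ≤ ∫ q in norm ⁻¹' Ico r a, (n + 1 : ℝ) * (‖q‖ ^ n)⁻¹ :=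
        setIntegral_mono_set hint (ae_of_all _ fun q => by positivity) (.of_forall hB)
    _ = _ := by rw [integral_const_mul, hshell]

lemma abs_setIntegral_dipoleKernel_truncatedAnnulus_le {δ r a : ℝ} (hδ : 0 < δ) (hr : 0 < r)
    (hra : r ≤ a) (k i j : ι) :
    |∫ q in {q : EuclideanSpace ℝ ι | δ < ‖q‖ ∧ ‖q‖ < a ∧ -r < q k}, dipoleKernel i j q| ≤
      (Fintype.card ι + 1) * (Fintype.card ι * volume.real (ball (0 : EuclideanSpace ℝ ι) 1) *
        Real.log (a / r)) := by
  have : Nonempty ι := ⟨k⟩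
  have hhalf : MeasurableSet {q : EuclideanSpace ℝ ι | -r < q k} :=
    (isOpen_lt continuous_const (by fun_prop)).measurableSet
  have hsplit := integral_inter_add_sdiff hhalf (integrableOn_dipoleKernel_annulus hδ a i j)
  rw [integral_dipoleKernel_annulus hδ a i j] at hsplit
  have hcap : {q : EuclideanSpace ℝ ι | δ < ‖q‖ ∧ ‖q‖ < a ∧ -r < q k} =
      norm ⁻¹' Ioo δ a ∩ {q | -r < q k} := by
    ext q; simp [and_assoc]
  have hcut : norm ⁻¹' Ioo δ a \ {q : EuclideanSpace ℝ ι | -r < q k} ⊆ norm ⁻¹' Ico r a := by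
    rintro q ⟨⟨-, hqa⟩, hqk⟩
    have hk : r ≤ |q k| := le_abs.2 (Or.inr (le_neg.2 (not_lt.1 hqk)))
    exact ⟨hk.trans (by simpa using PiLp.norm_apply_le q k), hqa⟩
  rw [hcap, eq_neg_of_add_eq_zero_left hsplit, abs_neg]
  exact abs_setIntegral_dipoleKernel_le_of_subset_shell hr hra hcut i j

end DipoleKernel

lemma matNorm_le_of_forall_abs_le {M : Matrix (Fin 3) (Fin 3) ℝ} {K : ℝ}
    (h : ∀ i j, |M i j| ≤ K) : matNorm M ≤ 3 * K := by
  have hK : 0 ≤ K := (abs_nonneg _).trans (h 0 0)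
  rw [matNorm, Real.sqrt_le_left (by positivity)]
  calc ∑ i, ∑ j, M i j ^ 2 ≤ ∑ _i : Fin 3, ∑ _j : Fin 3, K ^ 2 :=
        Finset.sum_le_sum fun i _ => Finset.sum_le_sum fun j _ =>
          sq_le_sq' (abs_le.1 (h i j)).1 (abs_le.1 (h i j)).2
    _ = (3 * K) ^ 2 := by simp; ring

lemma dipoleKernel_fin_three (i j : Fin 3) (q : E3) :
    dipoleKernel i j q =
      (‖q‖ ^ 2 * (if i = j then (1 : ℝ) else 0) - 3 * q i * q j) / ‖q‖ ^ 5 := by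
  simp [dipoleKernel]

theorem truncated_annulus_matrix_integral_bound :
    ∃ C > 0, ∀ a δ r : ℝ, 0 < a → 0 < δ → δ < a → 0 < r → r ≤ a →
      matNorm (Matrix.of fun i j =>
          ∫ q in {q : E3 | δ < ‖q‖ ∧ ‖q‖ < a ∧ -r < q 2},
            (‖q‖ ^ 2 * (if i = j then (1 : ℝ) else 0) - 3 * q i * q j) / ‖q‖ ^ 5)
        ≤ C * (1 + Real.log (a / r)) := by
  set V := volume.real (ball (0 : E3) 1)
  have hV : 0 < V := ENNReal.toReal_pos (measure_ball_pos _ _ one_pos).ne' measure_ball_lt_top.ne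
  refine ⟨3 * ((3 + 1) * (3 * V)), by positivity, fun a δ r _ hδ _ hr hra => ?_⟩
  have hlog : 0 ≤ Real.log (a / r) := Real.log_nonneg ((one_le_div hr).2 hra)
  have hentry (i j : Fin 3) := abs_setIntegral_dipoleKernel_truncatedAnnulus_le hδ hr hra 2 i j
  simp only [dipoleKernel_fin_three, Fintype.card_fin, Nat.cast_ofNat] at hentry
  calc _ ≤ 3 * ((3 + 1) * (3 * V * Real.log (a / r))) := matNorm_le_of_forall_abs_le hentry
    _ ≤ _ := by nlinarith
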